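/- arXiv:2112.15466 — 3 statements merged into one kernel-verified Lean document; each statement's English description precedes it below -/
import Mathlib

section
/- Let a be a basis vector of F_{q^m} over F_q (its m components form an F_q-basis of F_{q^m}) and M = Mr_k(a) the k×m Moore matrix it generates, with k ≤ m. Then for any k×n Moore matrix M' over F_{q^m}, there exists a matrix Q ∈ M_{m,n}(F_q) such that M' = MQ. -/
/-- The `k × n` Moore matrix of a vector `a`, with `(i,j)` entry `a j ^ q ^ i`. -/
def mooreMatrix (q k : ℕ) {n : ℕ} {K : Type*} [Field K] (a : Fin n → K) :
    Matrix (Fin k) (Fin n) K :=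
  Matrix.of fun i j => a j ^ q ^ (i : ℕ)

open Matrix

/-! Raising to the power `q ^ i` is the `i`-th iterate of the Frobenius `F_q`-algebra
endomorphism, hence commutes with `F_q`-linear combinations: if `b = a Q` with `Q` over `F_q`,
then the Moore matrix of `b` is the Moore matrix of `a` times `Q`. A spanning family `a` writes
every `b` in this form. -/

theorem FiniteField.frobeniusAlgHom_pow_apply (K R : Type*) [Field K] [Fintype K] [CommRing R]
    [Algebra K R] (i : ℕ) (x : R) :
    (FiniteField.frobeniusAlgHom K R ^ i) x = x ^ Fintype.card K ^ i := by
  rw [AlgHom.coe_pow, FiniteField.coe_frobeniusAlgHom, pow_iterate]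

theorem mooreMatrix_vecMul_map {Fq K : Type*} [Field Fq] [Fintype Fq] [Field K] [Algebra Fq K]
    {m n : ℕ} (k : ℕ) (a : Fin m → K) (Q : Matrix (Fin m) (Fin n) Fq) :
    mooreMatrix (Fintype.card Fq) k (a ᵥ* Q.map (algebraMap Fq K))
      = mooreMatrix (Fintype.card Fq) k a * Q.map (algebraMap Fq K) := by
  ext i j
  simp only [mooreMatrix, Matrix.of_apply, Matrix.mul_apply, Matrix.vecMul, dotProduct,
    Matrix.map_apply, ← FiniteField.frobeniusAlgHom_pow_apply, map_sum, map_mul, AlgHom.commutes]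

theorem Submodule.exists_vecMul_map_eq_of_span_eq_top {R K ι κ : Type*} [CommRing R] [Ring K]
    [Algebra R K] [Fintype ι] {a : ι → K} (hspan : Submodule.span R (Set.range a) = ⊤)
    (b : κ → K) : ∃ Q : Matrix ι κ R, a ᵥ* Q.map (algebraMap R K) = b := by
  have hb (j : κ) : ∃ c : ι → R, ∑ t, c t • a t = b j :=
    (Submodule.mem_span_range_iff_exists_fun R).mp (hspan ▸ Submodule.mem_top)
  choose c hc using hb
  refine ⟨Matrix.of fun t j => c j t, funext fun j => ?_⟩
  simp only [Matrix.vecMul, dotProduct, Matrix.map_apply, Matrix.of_apply, ← hc j,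
    Algebra.smul_def, Algebra.commutes]

theorem moore_decomposition_general (Fq K : Type*) [Field Fq] [Fintype Fq] [Field K] [Algebra Fq K]
    (m k n : ℕ) (a : Fin m → K)
    (hspan : Submodule.span Fq (Set.range a) = ⊤)
    (b : Fin n → K) :
    ∃ Q : Matrix (Fin m) (Fin n) Fq,
      mooreMatrix (Fintype.card Fq) k b
        = mooreMatrix (Fintype.card Fq) k a * Q.map (algebraMap Fq K) := by
  obtain ⟨Q, rfl⟩ := Submodule.exists_vecMul_map_eq_of_span_eq_top hspan b
  exact ⟨Q, mooreMatrix_vecMul_map k a Q⟩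

/-- Moore matrix decomposition: if `a` is a basis vector of `F_{q^m}` over `F_q` and
`M = Mr_k(a)` is the `k × m` Moore matrix it generates (`k ≤ m`), then any `k × n` Moore matrix
`M'` can be written as `M' = M Q` for some `Q ∈ M_{m,n}(F_q)`. -/
theorem moore_decomposition (Fq K : Type*) [Field Fq] [Fintype Fq] [Field K] [Algebra Fq K]
    (m k n : ℕ) (hk : k ≤ m) (a : Fin m → K)
    (ha : LinearIndependent Fq a) (hspan : Submodule.span Fq (Set.range a) = ⊤)
    (b : Fin n → K) :
    ∃ Q : Matrix (Fin m) (Fin n) Fq,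
      mooreMatrix (Fintype.card Fq) k b
        = mooreMatrix (Fintype.card Fq) k a * Q.map (algebraMap Fq K) :=
  moore_decomposition_general Fq K m k n a hspan b
end

section
/- Let G = Gab_{n,k}(g) be an [n,k] Gabidulin code over F_{q^m} with generating vector g, and let l ≤ min{k−1, n−k} be a positive integer. Then the intersection G ∩ G^{[l]} is the [n, k−l] Gabidulin code with generating vector g^{[l]}: G ∩ G^{[l]} = Gab_{n,k-l}(g^{[l]}). -/
/-- The `[n,k]` Gabidulin code generated by `g`: the row space of the Moore matrix `Mr_k(g)`. -/
def gabidulinCode (q k : ℕ) {n : ℕ} {K : Type*} [Field K] (g : Fin n → K) :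
    Submodule K (Fin n → K) :=
  Submodule.span K (Set.range fun i => mooreMatrix q k g i)

open Polynomial Submodule

theorem LinearIndepOn.span_image_inf_span_image {R M ι : Type*} [Ring R] [AddCommGroup M]
    [Module R M] {v : ι → M} {s t : Set ι} (hv : LinearIndepOn R v (s ∪ t)) :
    span R (v '' s) ⊓ span R (v '' t) = span R (v '' (s ∩ t)) := by
  refine le_antisymm (fun x ⟨hxs, hxt⟩ => ?_)
    (le_inf (span_mono (Set.image_mono Set.inter_subset_left))
      (span_mono (Set.image_mono Set.inter_subset_right)))
  obtain ⟨a, ha, rfl⟩ := (Finsupp.mem_span_image_iff_linearCombination R).mp hxs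
  obtain ⟨b, hb, hab⟩ := (Finsupp.mem_span_image_iff_linearCombination R).mp hxt
  have hba : b = a := by
    rw [← sub_eq_zero]
    refine linearIndepOn_iff.mp hv _ (sub_mem ?_ ?_) (by rw [map_sub, hab, sub_self])
    · exact Finsupp.supported_mono Set.subset_union_right hb
    · exact Finsupp.supported_mono Set.subset_union_left ha
  refine (Finsupp.mem_span_image_iff_linearCombination R).mpr ⟨a, ?_, rfl⟩
  rw [Finsupp.supported_inter]
  exact ⟨ha, hba ▸ hb⟩

theorem image_ringEquiv_comp_span {R ι : Type*} [Semiring R] (σ : R ≃+* R) (S : Set (ι → R)) :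
    (fun c => σ ∘ c) '' (span R S : Set (ι → R)) = span R ((fun c => σ ∘ c) '' S) := by
  let Φ : (ι → R) →ₛₗ[(σ : R →+* R)] (ι → R) :=
    { toFun := fun c => σ ∘ c
      map_add' := fun _ _ => funext fun _ => map_add σ _ _
      map_smul' := fun _ _ => funext fun _ => map_mul σ _ _ }
  exact (map_coe Φ _).symm.trans (congrArg SetLike.coe (map_span Φ S))

noncomputable def linearizedPolynomial {R : Type*} [Semiring R] (q : ℕ) {n : ℕ} (c : Fin n → R) :
    R[X] :=
  ∑ i, C (c i) * X ^ q ^ (i : ℕ)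

section Linearized

variable {R : Type*} [Semiring R] {q n : ℕ}

theorem coeff_linearizedPolynomial_pow (hq : 1 < q) (c : Fin n → R) (i : Fin n) :
    (linearizedPolynomial q c).coeff (q ^ (i : ℕ)) = c i := by
  simp [linearizedPolynomial, coeff_X_pow, Nat.pow_right_inj hq, Fin.val_inj]

theorem natDegree_linearizedPolynomial_lt (hq : 1 < q) (c : Fin n → R) :
    (linearizedPolynomial q c).natDegree < q ^ n := by
  rcases n with _ | n
  · simp [linearizedPolynomial]
  refine (natDegree_sum_le_of_forall_le _ _ fun i _ =>
    (natDegree_C_mul_X_pow_le _ _).trans ?_).trans_lt (Nat.pow_lt_pow_right hq n.lt_succ_self)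
  exact Nat.pow_le_pow_right (by omega) (Nat.lt_succ_iff.mp i.2)

end Linearized

section Frobenius

variable {Fq K : Type*} [Field Fq] [Fintype Fq] [Field K] [Algebra Fq K] {n : ℕ}

theorem eval_linearizedPolynomial_eq_zero_of_mem_span {ι : Type*} {g : ι → K} (c : Fin n → K)
    (hg : ∀ j, (linearizedPolynomial (Fintype.card Fq) c).eval (g j) = 0) {x : K}
    (hx : x ∈ span Fq (Set.range g)) : (linearizedPolynomial (Fintype.card Fq) c).eval x = 0 := by
  -- evaluation of a linearized polynomial is a combination of powers of the Frobenius
  let L : K →ₗ[Fq] K := ∑ i, c i • (FiniteField.frobeniusAlgHom Fq K ^ (i : ℕ)).toLinearMap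
  have hL : ∀ y, L y = (linearizedPolynomial (Fintype.card Fq) c).eval y := by
    intro y
    simp [L, linearizedPolynomial, eval_finsetSum, AlgHom.coe_pow,
      FiniteField.coe_frobeniusAlgHom, pow_iterate]
  rw [← hL]
  refine (span_le (p := LinearMap.ker L)).mpr ?_ hx
  rintro _ ⟨j, rfl⟩
  exact (hL _).trans (hg j)

theorem linearizedPolynomial_eq_zero_of_linearIndependent {g c : Fin n → K}
    (hg : LinearIndependent Fq g)
    (h : ∀ j, (linearizedPolynomial (Fintype.card Fq) c).eval (g j) = 0) :
    linearizedPolynomial (Fintype.card Fq) c = 0 := by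
  let V := span Fq (Set.range g)
  have : Module.Finite Fq V := FiniteDimensional.span_of_finite Fq (Set.finite_range g)
  have : Finite V := Module.finite_of_finite Fq
  have : Fintype V := Fintype.ofFinite V
  refine eq_zero_of_natDegree_lt_card_of_eval_eq_zero _ (f := ((↑) : V → K)) Subtype.val_injective
    (fun x => eval_linearizedPolynomial_eq_zero_of_mem_span c h x.2) ?_
  rw [Module.card_eq_pow_finrank (K := Fq) (V := V), finrank_span_eq_card hg, Fintype.card_fin]
  exact natDegree_linearizedPolynomial_lt Fintype.one_lt_card c

theorem linearIndepOn_frobenius_pow {g : Fin n → K} (hg : LinearIndependent Fq g) :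
    LinearIndepOn K (fun i j => g j ^ Fintype.card Fq ^ i) (Set.Iio n) := by
  refine (linearIndependent_equiv (ι' := Set.Iio n) Fin.equivSubtype).mp ?_
  rw [Fintype.linearIndependent_iff]
  intro c hc i
  have hP : linearizedPolynomial (Fintype.card Fq) c = 0 :=
    linearizedPolynomial_eq_zero_of_linearIndependent hg fun j => by
      have hcj := congrFun hc j
      simp only [Finset.sum_apply, Pi.smul_apply, smul_eq_mul, Function.comp_apply,
        Pi.zero_apply] at hcj
      simp only [linearizedPolynomial, eval_finsetSum, eval_mul, eval_C, eval_pow, eval_X]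
      exact hcj
  simpa [hP] using (coeff_linearizedPolynomial_pow (Fintype.one_lt_card (α := Fq)) c i).symm

end Frobenius

section Gabidulin

variable {K : Type*} [Field K] {n : ℕ}

theorem gabidulinCode_frobenius_eq_span_image (q k l : ℕ) (g : Fin n → K) :
    gabidulinCode q k (fun j => g j ^ q ^ l) =
      span K ((fun i j => g j ^ q ^ i) '' Set.Ico l (l + k)) := by
  rw [gabidulinCode]
  congr 1
  ext x
  constructor
  · rintro ⟨i, rfl⟩
    refine ⟨l + i, ⟨by omega, by omega⟩, funext fun j => ?_⟩
    simp [mooreMatrix, ← pow_mul, ← pow_add]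
  · rintro ⟨i, ⟨hli, hik⟩, rfl⟩
    refine ⟨⟨i - l, by omega⟩, funext fun j => ?_⟩
    simp [mooreMatrix, ← pow_mul, ← pow_add, Nat.add_sub_cancel' hli]

theorem frobenius_image_gabidulinCode (Fq : Type*) [Field Fq] [Fintype Fq] [Algebra Fq K]
    [Finite K] (k l : ℕ) (g : Fin n → K) :
    {x : Fin n → K | ∃ c ∈ gabidulinCode (Fintype.card Fq) k g,
        x = fun j => c j ^ Fintype.card Fq ^ l} =
      gabidulinCode (Fintype.card Fq) k (fun j => g j ^ Fintype.card Fq ^ l) := by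
  let σ : K ≃+* K := (FiniteField.frobeniusAlgEquivOfAlgebraic Fq K ^ l : K ≃ₐ[Fq] K)
  have hσ : ∀ x, σ x = x ^ Fintype.card Fq ^ l := fun x => by
    simp [σ, AlgEquiv.coe_pow, FiniteField.coe_frobeniusAlgEquivOfAlgebraic_iterate]
  have himage : {x : Fin n → K | ∃ c ∈ gabidulinCode (Fintype.card Fq) k g,
      x = fun j => c j ^ Fintype.card Fq ^ l} =
      (fun c => σ ∘ c) '' gabidulinCode (Fintype.card Fq) k g := by
    ext x
    simp [Function.comp_def, hσ, eq_comm]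
  rw [himage, gabidulinCode, image_ringEquiv_comp_span, ← Set.range_comp]
  refine congrArg (fun rows : Fin k → Fin n → K => ((span K (Set.range rows) : Submodule K _) :
    Set (Fin n → K))) (funext fun i => ?_)
  funext j
  simp [mooreMatrix, hσ, ← pow_mul, mul_comm]

end Gabidulin

theorem gabidulin_inter_frobenius_general (Fq K : Type*) [Field Fq] [Fintype Fq] [Field K]
    [Algebra Fq K] [Fintype K] (n k l : ℕ)
    (hkn : k ≤ n) (hlmin : l ≤ min (k - 1) (n - k))
    (g : Fin n → K) (hg : LinearIndependent Fq g) :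
    (↑(gabidulinCode (Fintype.card Fq) k g) ∩
        {x : Fin n → K | ∃ c ∈ gabidulinCode (Fintype.card Fq) k g,
          x = fun j => c j ^ Fintype.card Fq ^ l} : Set (Fin n → K))
      = ↑(gabidulinCode (Fintype.card Fq) (k - l)
          (fun j => g j ^ Fintype.card Fq ^ l)) := by
  set q := Fintype.card Fq
  have hG : gabidulinCode q k g = span K ((fun i j => g j ^ q ^ i) '' Set.Ico 0 k) := by
    simpa using gabidulinCode_frobenius_eq_span_image q k 0 g
  have hv : LinearIndepOn K (fun i j => g j ^ q ^ i) (Set.Ico 0 k ∪ Set.Ico l (l + k)) :=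
    (linearIndepOn_frobenius_pow hg).mono fun i hi => by
      simp only [Set.mem_union, Set.mem_Ico, Set.mem_Iio] at hi ⊢
      omega
  rw [frobenius_image_gabidulinCode, ← coe_inf, hG, gabidulinCode_frobenius_eq_span_image,
    gabidulinCode_frobenius_eq_span_image, hv.span_image_inf_span_image, Set.Ico_inter_Ico]
  have hlk : l ≤ k := by omega
  rw [max_eq_right l.zero_le, min_eq_left (k.le_add_left l), Nat.add_sub_cancel' hlk]

/-- Let `G = Gab_{n,k}(g)` be an `[n,k]` Gabidulin code over `F_{q^m}` with generating vector
`g`, and let `0 < l ≤ min {k-1, n-k}`.  Then `G ∩ G^{[l]} = Gab_{n,k-l}(g^{[l]})`. -/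
theorem gabidulin_inter_frobenius (Fq K : Type*) [Field Fq] [Fintype Fq] [Field K]
    [Algebra Fq K] [Fintype K] (m n k l : ℕ)
    (hcard : Fintype.card K = Fintype.card Fq ^ m)
    (hk : 0 < k) (hkn : k ≤ n) (hnm : n ≤ m)
    (hl : 0 < l) (hlmin : l ≤ min (k - 1) (n - k))
    (g : Fin n → K) (hg : LinearIndependent Fq g) :
    (↑(gabidulinCode (Fintype.card Fq) k g) ∩
        {x : Fin n → K | ∃ c ∈ gabidulinCode (Fintype.card Fq) k g,
          x = fun j => c j ^ Fintype.card Fq ^ l} : Set (Fin n → K))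
      = ↑(gabidulinCode (Fintype.card Fq) (k - l)
          (fun j => g j ^ Fintype.card Fq ^ l)) :=
  gabidulin_inter_frobenius_general Fq K n k l hkn hlmin g hg
end

section
/- Let G = Gab_{n,k}(g) be an [n,k] Gabidulin code over F_{q^m} with generating vector g, where k < n ≤ m. A codeword g' ∈ G is a generating vector of G (i.e., Gab_{n,k}(g') = G and g' has F_q-linearly independent components) if and only if g' = γ g for some nonzero γ ∈ F_{q^m}. -/
/-!
Let `Φ` be the componentwise Frobenius `x ↦ x ^ q` on `K ^ n`, and attach to a subspace `C` the
chain `W₀ = C`, `W_{j+1} = W_j ⊓ Φ(W_j)`, which depends on `C` alone. The Moore rows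
`g, g^[1], …, g^[n-1]` of an `F_q`-independent `g` are `K`-independent (a nonzero `q`-polynomial
of `q`-degree `< n` cannot vanish on the `q ^ n` elements of the `F_q`-span of `g`). Since `Φ`
shifts the rows and `k + 1 ≤ n`, the chain of `Gab_{n,k}(g)` is `W_j = ⟨g^[j], …, g^[k-1]⟩`, so
`W_{k-1} = K ∙ g^[k-1]`. If `g'` also generates the code, then `g'^[k-1] = c • g^[k-1]`, and
taking the `q ^ (k-1)`-th root of `c` gives `g' = γ • g`.
-/

open Submodule Polynomial

section InfMapChain

variable {R M : Type*} [Semiring R] [AddCommMonoid M] [Module R M]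

theorem LinearIndepOn.span_image_inter {ι : Type*} {v : ι → M} {s a b : Set ι}
    (hv : LinearIndepOn R v s) (ha : a ⊆ s) (hb : b ⊆ s) :
    span R (v '' (a ∩ b)) = span R (v '' a) ⊓ span R (v '' b) := by
  refine le_antisymm (le_inf (span_mono (Set.image_mono Set.inter_subset_left))
    (span_mono (Set.image_mono Set.inter_subset_right))) ?_
  intro x hx
  obtain ⟨hxa, hxb⟩ := mem_inf.mp hx
  rw [Finsupp.mem_span_image_iff_linearCombination] at hxa hxb ⊢
  obtain ⟨l, hla, rfl⟩ := hxa
  obtain ⟨l', hlb, hl⟩ := hxb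
  obtain rfl : l' = l :=
    linearIndepOn_iffₛ.mp hv _ (Finsupp.supported_mono hb hlb) _ (Finsupp.supported_mono ha hla) hl
  exact ⟨l', (Finsupp.supported_inter a b).ge ⟨hla, hlb⟩, rfl⟩

variable {σ : R →+* R} [RingHomSurjective σ] (Φ : M →ₛₗ[σ] M)

def infMapChain (C : Submodule R M) : ℕ → Submodule R M
  | 0 => C
  | j + 1 => infMapChain C j ⊓ (infMapChain C j).map Φ

theorem infMapChain_span_image_Ico {v : ℕ → M} (hΦv : ∀ i, Φ (v i) = v (i + 1)) {k : ℕ}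
    (hv : LinearIndepOn R v (Set.Iic k)) :
    ∀ j, infMapChain Φ (span R (v '' Set.Iio k)) j = span R (v '' Set.Ico j k)
  | 0 => by rw [← Set.Ico_bot]; rfl
  | j + 1 => by
    have hshift : Φ '' (v '' Set.Ico j k) = v '' Set.Ico (j + 1) (k + 1) := by
      rw [Set.image_image, ← Set.image_add_const_Ico, Set.image_image]
      simp only [hΦv]
    rw [infMapChain, infMapChain_span_image_Ico hΦv hv j, map_span, hshift,
      ← hv.span_image_inter (fun i hi => le_of_lt hi.2) (fun i hi => Nat.lt_succ_iff.mp hi.2),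
      Set.Ico_inter_Ico, sup_of_le_right j.le_succ, inf_of_le_left k.le_succ]

end InfMapChain

@[simps]
def RingHom.compLeftₛₗ {R : Type*} [Semiring R] (σ : R →+* R) (ι : Type*) :
    (ι → R) →ₛₗ[σ] (ι → R) where
  toFun v := σ ∘ v
  map_add' u v := funext fun j => map_add σ (u j) (v j)
  map_smul' c v := funext fun j => map_mul σ c (v j)

theorem Polynomial.coeff_sum_C_mul_X_pow_pow {R : Type*} [Semiring R] {q : ℕ} (hq : 1 < q)
    (t : Finset ℕ) (c : ℕ → R) (i : ℕ) :
    (∑ j ∈ t, C (c j) * X ^ q ^ j).coeff (q ^ i) = if i ∈ t then c i else 0 := by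
  simp only [finsetSum_coeff, coeff_C_mul_X_pow, Nat.pow_right_inj hq, Finset.sum_ite_eq]

def mooreRow {K : Type*} [Field K] (q : ℕ) {n : ℕ} (u : Fin n → K) (i : ℕ) : Fin n → K :=
  fun j => u j ^ q ^ i

section Frobenius

variable {Fq K : Type*} [Field Fq] [Fintype Fq] [Field K] [Algebra Fq K]

theorem sum_smul_pow_card_pow {ι : Type*} (s : Finset ι) (a : ι → Fq) (u : ι → K) (i : ℕ) :
    (∑ j ∈ s, a j • u j) ^ Fintype.card Fq ^ i = ∑ j ∈ s, a j • u j ^ Fintype.card Fq ^ i := by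
  have hφ : ∀ x : K, (FiniteField.frobeniusAlgHom Fq K ^ i) x = x ^ Fintype.card Fq ^ i :=
    fun x => by rw [AlgHom.coe_pow, FiniteField.coe_frobeniusAlgHom, pow_iterate]
  simp only [← hφ, map_sum, map_smul]

theorem linearIndepOn_mooreRow {n : ℕ} {g : Fin n → K} (hg : LinearIndependent Fq g) :
    LinearIndepOn K (mooreRow (Fintype.card Fq) g) (Set.Iio n) := by
  have hq : 1 < Fintype.card Fq := Fintype.one_lt_card
  rw [linearIndepOn_iff']
  intro t c ht hc i hi
  set P : K[X] := ∑ i ∈ t, C (c i) * X ^ Fintype.card Fq ^ i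
  have hPeval : ∀ a : Fin n → Fq, P.eval (Fintype.linearCombination Fq g a) = 0 := by
    intro a
    have hcol : ∀ j, ∑ i ∈ t, c i * g j ^ Fintype.card Fq ^ i = 0 := fun j => by
      simpa [mooreRow] using congrFun hc j
    simp only [P, eval_finsetSum, eval_mul, eval_C, eval_pow, eval_X,
      Fintype.linearCombination_apply, sum_smul_pow_card_pow, Finset.mul_sum, mul_smul_comm]
    rw [Finset.sum_comm]
    simp [← Finset.smul_sum, hcol]
  have hPdeg : P.natDegree < Fintype.card (Fin n → Fq) := by
    rw [Fintype.card_fun, Fintype.card_fin]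
    refine (natDegree_sum_le_of_forall_le _ _ fun j hj => ?_).trans_lt
      (Nat.sub_lt (Nat.pos_of_ne_zero (by positivity)) one_pos)
    have := Nat.pow_lt_pow_right hq (ht hj)
    exact (natDegree_C_mul_X_pow_le _ _).trans (by omega)
  have hP : P = 0 := eq_zero_of_natDegree_lt_card_of_eval_eq_zero P
    hg.fintypeLinearCombination_injective hPeval hPdeg
  simpa [P, coeff_sum_C_mul_X_pow_pow hq, hi] using congrArg (coeff · (Fintype.card Fq ^ i)) hP

end Frobenius

section Gabidulin

variable {Fq K : Type*} [Field Fq] [Fintype Fq] [Field K] [Algebra Fq K] {n : ℕ}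

theorem gabidulinCode_eq_span_mooreRow (q k : ℕ) (u : Fin n → K) :
    gabidulinCode q k u = span K (mooreRow q u '' Set.Iio k) := by
  rw [gabidulinCode, ← Fin.range_val, ← Set.range_comp]
  rfl

theorem compLeftₛₗ_frobeniusAlgEquivOfAlgebraic_mooreRow [Finite K] (u : Fin n → K) (i : ℕ) :
    RingHom.compLeftₛₗ (FiniteField.frobeniusAlgEquivOfAlgebraic Fq K : K ≃+* K) (Fin n)
        (mooreRow (Fintype.card Fq) u i) = mooreRow (Fintype.card Fq) u (i + 1) := by
  funext j
  rw [RingHom.compLeftₛₗ_apply]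
  simp [mooreRow, pow_succ, pow_mul]

theorem infMapChain_gabidulinCode [Finite K] {u : Fin n → K} (hu : LinearIndependent Fq u)
    {k : ℕ} (hkn : k + 1 < n) :
    infMapChain
        (RingHom.compLeftₛₗ (FiniteField.frobeniusAlgEquivOfAlgebraic Fq K : K ≃+* K) (Fin n))
        (gabidulinCode (Fintype.card Fq) (k + 1) u) k =
      K ∙ mooreRow (Fintype.card Fq) u k := by
  rw [gabidulinCode_eq_span_mooreRow,
    infMapChain_span_image_Ico _ (compLeftₛₗ_frobeniusAlgEquivOfAlgebraic_mooreRow u)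
      ((linearIndepOn_mooreRow hu).mono fun i hi => lt_of_le_of_lt hi hkn),
    Set.Ico_add_one_right_eq_Icc, Set.Icc_self, Set.image_singleton]

theorem exists_eq_smul_of_smul_mooreRow_eq [Finite K] {u u' : Fin n → K} {c : K} {k : ℕ}
    (hc : c • mooreRow (Fintype.card Fq) u k = mooreRow (Fintype.card Fq) u' k) :
    ∃ γ : K, u' = γ • u := by
  set τ := FiniteField.frobeniusAlgEquivOfAlgebraic Fq K ^ k
  have hτ : ∀ x, τ x = x ^ Fintype.card Fq ^ k := fun x => by
    rw [AlgEquiv.coe_pow, FiniteField.coe_frobeniusAlgEquivOfAlgebraic_iterate]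
  refine ⟨τ.symm c, funext fun j => τ.injective ?_⟩
  rw [Pi.smul_apply, smul_eq_mul, map_mul, τ.apply_symm_apply, hτ, hτ]
  exact (congrFun hc j).symm

theorem gabidulinCode_smul {γ : K} (hγ : γ ≠ 0) (q k : ℕ) (u : Fin n → K) :
    gabidulinCode q k (γ • u) = gabidulinCode q k u := by
  simp only [gabidulinCode, span_range_eq_iSup]
  refine iSup_congr fun i => ?_
  have hrow : mooreMatrix q k (γ • u) i = (γ ^ q ^ (i : ℕ)) • mooreMatrix q k u i := by
    funext j
    simp [mooreMatrix, mul_pow]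
  rw [hrow, span_singleton_smul_eq (pow_ne_zero _ hγ).isUnit]

end Gabidulin

theorem gabidulin_generating_vectors_general (Fq K : Type*) [Field Fq] [Fintype Fq] [Field K]
    [Algebra Fq K] [Fintype K] (n k : ℕ)
    (hk : 0 < k) (hkn : k < n)
    (g : Fin n → K) (hg : LinearIndependent Fq g)
    (g' : Fin n → K) :
    (LinearIndependent Fq g' ∧
        gabidulinCode (Fintype.card Fq) k g' = gabidulinCode (Fintype.card Fq) k g)
      ↔ ∃ γ : K, γ ≠ 0 ∧ g' = γ • g := by
  obtain ⟨k, rfl⟩ : ∃ j, k = j + 1 := ⟨k - 1, by omega⟩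
  constructor
  · rintro ⟨hg', hcode⟩
    have hrow : mooreRow (Fintype.card Fq) g' k ∈ K ∙ mooreRow (Fintype.card Fq) g k := by
      rw [← infMapChain_gabidulinCode hg hkn, ← hcode, infMapChain_gabidulinCode hg' hkn]
      exact mem_span_singleton_self _
    obtain ⟨c, hc⟩ := mem_span_singleton.mp hrow
    obtain ⟨γ, rfl⟩ := exists_eq_smul_of_smul_mooreRow_eq hc
    refine ⟨γ, ?_, rfl⟩
    rintro rfl
    exact hg'.ne_zero ⟨0, by omega⟩ (by simp)
  · rintro ⟨γ, hγ, rfl⟩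
    exact ⟨hg.map' (LinearMap.mulLeft Fq γ) (LinearMap.ker_eq_bot.mpr (mul_right_injective₀ hγ)),
      gabidulinCode_smul hγ _ _ g⟩

/-- Let `G = Gab_{n,k}(g)` be an `[n,k]` Gabidulin code over `F_{q^m}` with generating vector
`g`, where `k < n ≤ m`.  A codeword `g' ∈ G` is a generating vector of `G` if and only if
`g' = γ g` for some nonzero `γ ∈ F_{q^m}`. -/
theorem gabidulin_generating_vectors (Fq K : Type*) [Field Fq] [Fintype Fq] [Field K]
    [Algebra Fq K] [Fintype K] (m n k : ℕ)
    (hcard : Fintype.card K = Fintype.card Fq ^ m)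
    (hk : 0 < k) (hkn : k < n) (hnm : n ≤ m)
    (g : Fin n → K) (hg : LinearIndependent Fq g)
    (g' : Fin n → K) (hg' : g' ∈ gabidulinCode (Fintype.card Fq) k g) :
    (LinearIndependent Fq g' ∧
        gabidulinCode (Fintype.card Fq) k g' = gabidulinCode (Fintype.card Fq) k g)
      ↔ ∃ γ : K, γ ≠ 0 ∧ g' = γ • g :=
  gabidulin_generating_vectors_general Fq K n k hk hkn g hg g'
end
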